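/- arXiv:2005.08852 — 8 statements merged into one kernel-verified Lean document; each statement's English description precedes it below -/
import Mathlib

section
/- For any complex number z and any nonnegative integer i with i ≤ L (where L is a positive integer), the generalized binomial coefficient satisfies |C(z, i)| ≤ e^L · ((|z| + L)/L)^L. -/
open Finset

/-- Generalized binomial coefficient C(z,i) = z(z-1)⋯(z-i+1)/i! for complex z. -/
noncomputable def cbinom (z : ℂ) (i : ℕ) : ℂ :=
  (∏ k ∈ Finset.range i, (z - k)) / (i.factorial : ℂ)

/-! Each factor of the product defining `C(z, i)` has norm at most `‖z‖ + i`, so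
`|C(z, i)| ≤ A ^ i / i!` with `A = ‖z‖ + L`. Writing `A ^ i / i! = (A / L) ^ i · L ^ i / i!`,
the first factor grows with `i` since `A / L ≥ 1`, and the second is a term of the series
of `e ^ L`. -/

open Nat Real

theorem norm_cbinom_le (z : ℂ) (i : ℕ) : ‖cbinom z i‖ ≤ (‖z‖ + i) ^ i / i ! := by
  rw [cbinom, norm_div, norm_prod, Complex.norm_natCast]
  gcongr
  calc ∏ k ∈ range i, ‖z - k‖ ≤ ∏ _k ∈ range i, (‖z‖ + i) := by
        refine prod_le_prod (fun _ _ => norm_nonneg _) fun k hk => ?_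
        calc ‖z - k‖ ≤ ‖z‖ + k := by simpa using norm_sub_le z k
          _ ≤ ‖z‖ + i := by gcongr; exact (mem_range.mp hk).le
    _ = (‖z‖ + i) ^ i := by rw [prod_const, card_range]

theorem pow_div_factorial_le_exp_mul_div_pow {A : ℝ} {L i : ℕ} (hLA : (L : ℝ) ≤ A)
    (hi : i ≤ L) : A ^ i / i ! ≤ exp L * (A / L) ^ L := by
  obtain rfl | hL := L.eq_zero_or_pos
  · obtain rfl := Nat.le_zero.mp hi
    simp
  have hL0 : (0 : ℝ) < L := by exact_mod_cast hL
  calc A ^ i / i ! = (A / L) ^ i * ((L : ℝ) ^ i / i !) := by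
        rw [← mul_div_assoc, div_pow, div_mul_cancel₀ _ (pow_ne_zero _ hL0.ne')]
    _ ≤ (A / L) ^ L * exp L :=
        mul_le_mul (pow_le_pow_right₀ ((one_le_div hL0).mpr hLA) hi)
          (pow_div_factorial_le_exp _ hL0.le _) (by positivity)
          (pow_nonneg (div_nonneg (hL0.le.trans hLA) hL0.le) _)
    _ = exp L * (A / L) ^ L := mul_comm _ _

theorem binom_bound_general (L : ℕ) (z : ℂ) (i : ℕ) (hi : i ≤ L) :
    ‖cbinom z i‖ ≤
      Real.exp L * ((‖z‖ + L) / L) ^ L :=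
  calc ‖cbinom z i‖ ≤ (‖z‖ + i) ^ i / i ! := norm_cbinom_le z i
    _ ≤ (‖z‖ + L) ^ i / i ! := by gcongr
    _ ≤ exp L * ((‖z‖ + L) / L) ^ L :=
        pow_div_factorial_le_exp_mul_div_pow (le_add_of_nonneg_left (norm_nonneg z)) hi

/-- For z ∈ ℂ and 0 ≤ i ≤ L (L a positive integer),
    |C(z,i)| ≤ e^L ((|z|+L)/L)^L. -/
theorem binom_bound (L : ℕ) (hL : 0 < L) (z : ℂ) (i : ℕ) (hi : i ≤ L) :
    ‖cbinom z i‖ ≤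
      Real.exp L * ((‖z‖ + L) / L) ^ L :=
  binom_bound_general L z i hi
end

section
/- If a_1, ..., a_N are pairwise distinct integers, then the product ∏_{i=2}^{N} |a_1 - a_i| is at least (N-1)! / 2^{N-1}. -/
open Finset

/-- Enumeration of nonzero integers as positive naturals: 1↦1, -1↦2, 2↦3, -2↦4, … -/
def enumNZ (v : ℤ) : ℕ := if 0 < v then 2 * v.toNat - 1 else 2 * (-v).toNat

lemma one_le_enumNZ {v : ℤ} (hv : v ≠ 0) : 1 ≤ enumNZ v := by
  unfold enumNZ; split_ifs <;> omega

lemma enumNZ_le {v : ℤ} : enumNZ v ≤ 2 * v.natAbs := by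
  unfold enumNZ; split_ifs <;> omega

lemma enumNZ_inj {v w : ℤ} (hv : v ≠ 0) (hw : w ≠ 0) (h : enumNZ v = enumNZ w) :
    v = w := by
  unfold enumNZ at h; split_ifs at h <;> omega

/-- A finset of positive naturals of cardinality m has product at least m!. -/
lemma fact_le_prod (T : Finset ℕ) (hT : ∀ t ∈ T, 1 ≤ t) :
    T.card.factorial ≤ ∏ t ∈ T, t := by
  induction T using Finset.strongInduction with
  | _ T ih =>
    rcases T.eq_empty_or_nonempty with rfl | hne
    · simp
    · have hmax := T.max'_mem hne
      have hcard : T.card ≤ T.max' hne := by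
        have hsub : T ⊆ Finset.Icc 1 (T.max' hne) := fun t ht =>
          Finset.mem_Icc.mpr ⟨hT t ht, Finset.le_max' _ _ ht⟩
        calc T.card ≤ (Finset.Icc 1 (T.max' hne)).card := Finset.card_le_card hsub
          _ = T.max' hne := by simp
      rw [← Finset.prod_erase_mul _ _ hmax]
      have h1 := ih (T.erase (T.max' hne)) (Finset.erase_ssubset hmax)
        (fun t ht => hT t (Finset.mem_of_mem_erase ht))
      rw [Finset.card_erase_of_mem hmax] at h1
      have hc : T.card.factorial = (T.card - 1).factorial * T.card := by
        obtain ⟨n, hn⟩ := Nat.exists_eq_succ_of_ne_zero hne.card_pos.ne'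
        rw [hn]; simp [Nat.factorial_succ, Nat.mul_comm]
      rw [hc]
      exact Nat.mul_le_mul h1 hcard

/-- If a_1, …, a_N are pairwise distinct integers then
    ∏_{i=2}^N |a_1 - a_i| ≥ (N-1)!/2^{N-1}. -/
theorem prod_dist_ge (N : ℕ) (hN : 1 ≤ N) (a : Fin N → ℤ)
    (ha : Function.Injective a) :
    ((N - 1).factorial : ℝ) / 2 ^ (N - 1) ≤
      ∏ i ∈ Finset.univ.erase (⟨0, hN⟩ : Fin N), (|a ⟨0, hN⟩ - a i| : ℝ) := by
  set z : Fin N := ⟨0, hN⟩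
  set s : Finset (Fin N) := Finset.univ.erase z with hs
  have hscard : s.card = N - 1 := by
    rw [hs, Finset.card_erase_of_mem (Finset.mem_univ z), Finset.card_univ, Fintype.card_fin]
  set g : Fin N → ℕ := fun i => enumNZ (a z - a i) with hg
  have hne : ∀ i ∈ s, a z - a i ≠ 0 := by
    intro i hi
    have hiz : i ≠ z := Finset.ne_of_mem_erase hi
    intro h
    exact hiz (ha (by omega)).symm
  have hginj : Set.InjOn g s := by
    intro i hi j hj hij
    have := enumNZ_inj (hne i hi) (hne j hj) hij
    exact ha (by omega)
  -- natural number bound: (N-1)! ≤ ∏ g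
  have hnat : (N - 1).factorial ≤ ∏ i ∈ s, g i := by
    have himg : ∏ t ∈ s.image g, t = ∏ i ∈ s, g i :=
      Finset.prod_image (fun x hx y hy h => hginj hx hy h)
    rw [← himg]
    have hTcard : (s.image g).card = N - 1 := by
      rw [Finset.card_image_of_injOn hginj, hscard]
    calc (N - 1).factorial = (s.image g).card.factorial := by rw [hTcard]
      _ ≤ ∏ t ∈ s.image g, t := fact_le_prod _ (by
          intro t ht
          obtain ⟨i, hi, rfl⟩ := Finset.mem_image.mp ht
          exact one_le_enumNZ (hne i hi))
  -- real bound
  have hstep : ∀ i ∈ s, (0:ℝ) ≤ (g i : ℝ) / 2 ∧ (g i : ℝ) / 2 ≤ |(a z : ℝ) - (a i : ℝ)| := by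
    intro i hi
    constructor
    · positivity
    · rw [div_le_iff₀ (by norm_num)]
      have h1 : g i ≤ 2 * (a z - a i).natAbs := enumNZ_le
      have h2 : ((a z - a i).natAbs : ℝ) = |(a z : ℝ) - (a i : ℝ)| := by
        rw [Nat.cast_natAbs]; push_cast; ring_nf
      calc (g i : ℝ) ≤ 2 * ((a z - a i).natAbs : ℝ) := by exact_mod_cast h1
        _ = |(a z : ℝ) - (a i : ℝ)| * 2 := by rw [h2]; ring
  have hprod : ∏ i ∈ s, ((g i : ℝ) / 2) ≤ ∏ i ∈ s, |(a z : ℝ) - (a i : ℝ)| := by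
    apply Finset.prod_le_prod
    · exact fun i hi => (hstep i hi).1
    · exact fun i hi => (hstep i hi).2
  have hdist : ∏ i ∈ s, ((g i : ℝ) / 2) = (∏ i ∈ s, (g i : ℝ)) / 2 ^ (N - 1) := by
    rw [Finset.prod_div_distrib, Finset.prod_const, hscard]
  calc ((N - 1).factorial : ℝ) / 2 ^ (N - 1)
      ≤ (∏ i ∈ s, (g i : ℝ)) / 2 ^ (N - 1) := by
        gcongr
        exact_mod_cast hnat
      _ = ∏ i ∈ s, ((g i : ℝ) / 2) := hdist.symm
      _ ≤ ∏ i ∈ s, |(a z : ℝ) - (a i : ℝ)| := hprod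
end

section
/- Suppose φ is analytic on the closed disk |z| ≤ R and a_1, ..., a_N are nonzero complex numbers each of modulus less than R, pairwise distinct. Then |φ(0)| ≤ |φ|_R · ∏_{i=1}^{N} (|a_i|/R) + Σ_{i=1}^{N} |φ(a_i)| · ∏_{j=1}^{N} (|R² - a_i·conj(a_j)|/R²) · ∏_{k ≠ i} (|a_k|/|a_k - a_i|). -/
/-!
Put `W z = φ z * ∏ⱼ (R² - z * conj aⱼ) / R²`, so that `W 0 = φ 0` while on `|z| = R` each factor
has modulus `|z - aⱼ| / R`. The error at `0` of Lagrange interpolation of `W` at the nodes `aⱼ` is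
`(2πi)⁻¹ ∮ (∏ⱼ (0 - aⱼ)) / (z ∏ⱼ (z - aⱼ)) • W z` (Hermite's formula: the kernel splits into
simple fractions, and each is handled by Cauchy's integral formula), and on the circle this
integrand is at most `|φ|_R ∏ⱼ |aⱼ| / R ^ (N + 1)`. The Lagrange basis polynomials at `0` are
`∏_{k ≠ i} aₖ / (aₖ - aᵢ)`, so the triangle inequality gives the estimate.
-/

open Finset Polynomial

namespace Lagrange

variable {F : Type*} [Field F] {ι : Type*} [DecidableEq ι] {s : Finset ι} {v : ι → F} {i : ι}

theorem eval_basis (x : F) :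
    (Lagrange.basis s v i).eval x = ∏ j ∈ s.erase i, (x - v j) / (v i - v j) := by
  simp only [Lagrange.basis, basisDivisor, eval_prod, eval_mul, eval_C, eval_sub, eval_X,
    div_eq_inv_mul]

theorem sum_nodalWeight_mul_inv_sub (hvs : Set.InjOn v s) (hs : s.Nonempty) {x : F}
    (hx : ∀ i ∈ s, x ≠ v i) :
    ∑ i ∈ s, nodalWeight s v i * (x - v i)⁻¹ = (∏ i ∈ s, (x - v i))⁻¹ := by
  have h := eval_interpolate_not_at_node (1 : ι → F) hx
  simp only [interpolate_one hvs hs, eval_one, Pi.one_apply, mul_one, eval_nodal] at h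
  exact eq_inv_of_mul_eq_one_right h.symm

theorem sum_eval_basis_mul_inv_sub (hvs : Set.InjOn v s) {x z : F} (hxz : x ≠ z)
    (hx : ∀ i ∈ s, x ≠ v i) (hz : ∀ i ∈ s, z ≠ v i) :
    ∑ i ∈ s, (Lagrange.basis s v i).eval x * (z - v i)⁻¹ =
      (z - x)⁻¹ - (∏ i ∈ s, (x - v i)) / ((z - x) * ∏ i ∈ s, (z - v i)) := by
  rcases s.eq_empty_or_nonempty with rfl | hs
  · simp
  have hzx : z - x ≠ 0 := sub_ne_zero.2 hxz.symm
  have hPx : ∏ i ∈ s, (x - v i) ≠ 0 := prod_ne_zero_iff.2 fun i hi => sub_ne_zero.2 (hx i hi)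
  have hPz : ∏ i ∈ s, (z - v i) ≠ 0 := prod_ne_zero_iff.2 fun i hi => sub_ne_zero.2 (hz i hi)
  -- `((x - vᵢ) (z - vᵢ))⁻¹ = ((x - vᵢ)⁻¹ - (z - vᵢ)⁻¹) / (z - x)`, then partial fractions twice
  have hsplit : ∀ i ∈ s, (Lagrange.basis s v i).eval x * (z - v i)⁻¹ =
      (∏ i ∈ s, (x - v i)) * (z - x)⁻¹ *
        (nodalWeight s v i * (x - v i)⁻¹ - nodalWeight s v i * (z - v i)⁻¹) := by
    intro i hi
    rw [eval_basis_not_at_node hi (hx i hi), eval_nodal]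
    have := sub_ne_zero.2 (hx i hi)
    have := sub_ne_zero.2 (hz i hi)
    field_simp
    ring
  rw [sum_congr rfl hsplit, ← mul_sum, sum_sub_distrib, sum_nodalWeight_mul_inv_sub hvs hs hx,
    sum_nodalWeight_mul_inv_sub hvs hs hz]
  field_simp

end Lagrange

open Complex Metric Lagrange Real ComplexConjugate

section Hermite

variable {E : Type*} [NormedAddCommGroup E] [NormedSpace ℂ E] [CompleteSpace E]
  {ι : Type*} [DecidableEq ι] {s : Finset ι} {v : ι → ℂ} {c x : ℂ} {R : ℝ} {f : ℂ → E}

theorem DiffContOnCl.circleIntegral_interpolation_error (hf : DiffContOnCl ℂ f (ball c R))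
    (hvs : Set.InjOn v s) (hx : x ∈ ball c R) (hv : ∀ i ∈ s, v i ∈ ball c R)
    (hxv : ∀ i ∈ s, x ≠ v i) :
    (∮ z in C(c, R), ((∏ i ∈ s, (x - v i)) / ((z - x) * ∏ i ∈ s, (z - v i))) • f z) =
      (2 * π * I : ℂ) • (f x - ∑ i ∈ s, (Lagrange.basis s v i).eval x • f (v i)) := by
  have hR : 0 < R := pos_of_mem_ball hx
  have hfS : ContinuousOn f (sphere c R) :=
    hf.continuousOn.mono (closure_ball c hR.ne' ▸ sphere_subset_closedBall)
  have hcont : ∀ {w}, w ∈ ball c R → ContinuousOn (fun z => (z - w)⁻¹ • f z) (sphere c R) :=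
    fun hw => ((continuousOn_id.sub continuousOn_const).inv₀
      fun z hz => sub_ne_zero.2 (sphere_disjoint_ball.ne_of_mem hz hw)).smul hfS
  have hkernel : Set.EqOn
      (fun z => ((∏ i ∈ s, (x - v i)) / ((z - x) * ∏ i ∈ s, (z - v i))) • f z)
      (fun z => (z - x)⁻¹ • f z - ∑ i ∈ s, (Lagrange.basis s v i).eval x • ((z - v i)⁻¹ • f z))
      (sphere c R) := by
    intro z hz
    simp only [smul_smul, ← sum_smul, ← sub_smul]
    rw [sum_eval_basis_mul_inv_sub hvs (sphere_disjoint_ball.ne_of_mem hz hx).symm hxv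
      fun i hi => sphere_disjoint_ball.ne_of_mem hz (hv i hi)]
    ring_nf
  have hsum : CircleIntegrable
      (fun z => ∑ i ∈ s, (Lagrange.basis s v i).eval x • ((z - v i)⁻¹ • f z)) c R :=
    (continuousOn_finsetSum _ fun i hi => (hcont (hv i hi)).const_smul _).circleIntegrable hR.le
  rw [circleIntegral.integral_congr hR.le hkernel,
    circleIntegral.integral_sub ((hcont hx).circleIntegrable hR.le) hsum,
    circleIntegral.integral_fun_sum
      (f := fun i z => (Lagrange.basis s v i).eval x • ((z - v i)⁻¹ • f z))
      fun i hi => ((hcont (hv i hi)).const_smul _).circleIntegrable hR.le,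
    hf.circleIntegral_sub_inv_smul hx, smul_sub, smul_sum]
  congr 1
  refine sum_congr rfl fun i hi => ?_
  rw [circleIntegral.integral_smul, hf.circleIntegral_sub_inv_smul (hv i hi), smul_comm]

theorem DiffContOnCl.norm_sub_sum_eval_basis_smul_le (hf : DiffContOnCl ℂ f (ball c R))
    (hvs : Set.InjOn v s) (hx : x ∈ ball c R) (hv : ∀ i ∈ s, v i ∈ ball c R)
    (hxv : ∀ i ∈ s, x ≠ v i) {M : ℝ}
    (hM : ∀ z ∈ sphere c R, ‖f z‖ ≤ M * ‖(z - x) * ∏ i ∈ s, (z - v i)‖) :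
    ‖f x - ∑ i ∈ s, (Lagrange.basis s v i).eval x • f (v i)‖ ≤
      M * R * ‖∏ i ∈ s, (x - v i)‖ := by
  have hR : 0 < R := pos_of_mem_ball hx
  have hbound : ∀ z ∈ sphere c R,
      ‖((∏ i ∈ s, (x - v i)) / ((z - x) * ∏ i ∈ s, (z - v i))) • f z‖ ≤
        ‖∏ i ∈ s, (x - v i)‖ * M := by
    intro z hz
    have hQ : 0 < ‖(z - x) * ∏ i ∈ s, (z - v i)‖ := by
      refine norm_pos_iff.2 (mul_ne_zero ?_ (prod_ne_zero_iff.2 fun i hi => ?_)) <;>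
        refine sub_ne_zero.2 (sphere_disjoint_ball.ne_of_mem hz ?_)
      exacts [hx, hv i hi]
    rw [norm_smul, norm_div, div_mul_eq_mul_div, div_le_iff₀ hQ, mul_assoc]
    exact mul_le_mul_of_nonneg_left (hM z hz) (norm_nonneg _)
  have h := circleIntegral.norm_integral_le_of_norm_le_const hR.le hbound
  rw [hf.circleIntegral_interpolation_error hvs hx hv hxv, norm_smul] at h
  have h2π : ‖(2 * π * I : ℂ)‖ = 2 * π := by simp [abs_of_pos pi_pos]
  rw [h2π] at h
  nlinarith [pi_pos]

end Hermite

section Sphere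

variable {R : ℝ} {z : ℂ}

theorem norm_sq_sub_mul_conj_div_sq_of_norm_eq (hR : 0 < R) (hz : ‖z‖ = R) (w : ℂ) :
    ‖((R : ℂ) ^ 2 - z * conj w) / (R : ℂ) ^ 2‖ = ‖z - w‖ / R := by
  have hR2 : (R : ℂ) ^ 2 = z * conj z := by
    rw [mul_conj, normSq_eq_norm_sq, hz]; push_cast; rfl
  rw [norm_div, hR2, ← mul_sub, ← map_sub, norm_mul, Complex.norm_conj, ← hR2, norm_pow,
    norm_real, Real.norm_of_nonneg hR.le, hz]
  field_simp

theorem norm_prod_sq_sub_mul_conj_div_sq_of_norm_eq (hR : 0 < R) (hz : ‖z‖ = R)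
    {ι : Type*} [Fintype ι] (w : ι → ℂ) :
    ‖∏ j, ((R : ℂ) ^ 2 - z * conj (w j)) / (R : ℂ) ^ 2‖ =
      ‖z * ∏ j, (z - w j)‖ / R ^ (Fintype.card ι + 1) := by
  rw [norm_prod, prod_congr rfl fun j _ => norm_sq_sub_mul_conj_div_sq_of_norm_eq hR hz (w j),
    prod_div_distrib, prod_const, card_univ, norm_mul, norm_prod, hz, pow_succ]
  field_simp

end Sphere

/-- A version of Jensen's inequality (Lemma 6 of Ito–Hirata-Kohno):
    if φ is analytic on |z| ≤ R, the a_i are pairwise distinct nonzero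
    complex numbers of modulus < R, and Mφ bounds |φ| on the closed disk, then
    |φ(0)| ≤ Mφ ∏ (|a_i|/R)
      + Σ_i |φ(a_i)| ∏_j (|R² - a_i conj(a_j)|/R²) ∏_{k≠i} (|a_k|/|a_k - a_i|). -/
theorem jensen_estimate (R : ℝ) (hR : 0 < R) (φ : ℂ → ℂ)
    (hφ : AnalyticOn ℂ φ (Metric.closedBall (0 : ℂ) R))
    (N : ℕ) (a : Fin N → ℂ) (ha : Function.Injective a)
    (ha0 : ∀ i, a i ≠ 0) (haR : ∀ i, ‖a i‖ < R)
    (Mφ : ℝ) (hM : ∀ z ∈ Metric.closedBall (0 : ℂ) R, ‖φ z‖ ≤ Mφ) :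
    ‖φ 0‖ ≤
      Mφ * ∏ i, ‖a i‖ / R +
      ∑ i, ‖φ (a i)‖ *
        (∏ j, ‖(R : ℂ) ^ 2 - a i * (starRingEnd ℂ) (a j)‖ / R ^ 2) *
        ∏ k ∈ Finset.univ.erase i, ‖a k‖ / ‖a k - a i‖ := by
  set W : ℂ → ℂ := fun z => φ z * ∏ j, ((R : ℂ) ^ 2 - z * conj (a j)) / (R : ℂ) ^ 2
  have hW : DiffContOnCl ℂ W (ball 0 R) := by
    refine DifferentiableOn.diffContOnCl ?_
    rw [closure_ball 0 hR.ne']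
    exact hφ.differentiableOn.mul (by fun_prop)
  have hWsphere : ∀ z ∈ sphere 0 R,
      ‖W z‖ ≤ Mφ / R ^ (N + 1) * ‖(z - 0) * ∏ j, (z - a j)‖ := by
    intro z hz
    have hzR : ‖z‖ = R := by simpa using hz
    rw [norm_mul, norm_prod_sq_sub_mul_conj_div_sq_of_norm_eq hR hzR, Fintype.card_fin, sub_zero,
      mul_div_assoc', div_mul_eq_mul_div]
    gcongr
    exact hM z (sphere_subset_closedBall hz)
  have herror := hW.norm_sub_sum_eval_basis_smul_le ha.injOn (mem_ball_self hR)
    (fun i _ => by simpa using haR i) (fun i _ => (ha0 i).symm) hWsphere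
  calc ‖φ 0‖ = ‖(W 0 - ∑ i, (Lagrange.basis univ a i).eval 0 • W (a i)) +
        ∑ i, (Lagrange.basis univ a i).eval 0 • W (a i)‖ := by
          simp [W, (pow_pos hR 2).ne']
    _ ≤ Mφ / R ^ (N + 1) * R * ‖∏ i, (0 - a i)‖ +
        ∑ i, ‖(Lagrange.basis univ a i).eval 0 • W (a i)‖ :=
      (norm_add_le _ _).trans (add_le_add herror (norm_sum_le _ _))
    _ = _ := by
      congr 1
      · rw [norm_prod, prod_div_distrib, prod_const, card_univ, Fintype.card_fin]
        simp only [zero_sub, norm_neg]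
        field_simp
        ring
      · refine sum_congr rfl fun i _ => ?_
        simp only [W, norm_smul, norm_mul, norm_prod, norm_div, eval_basis, norm_pow, norm_real,
          Real.norm_of_nonneg hR.le, zero_sub, norm_neg, norm_sub_rev (a i)]
        ring
end

section
/- Let θ be a real algebraic function, analytic on an interval (a, ∞), such that θ(n) is an integer for all sufficiently large integers n. Then θ is a polynomial with rational coefficients. -/
/-!
An algebraic function has polynomial growth, say `θ = O(x ^ M)`, and algebraic functions are
closed under shifts and differences, so `φ = Δ^(M+1) θ` is algebraic and continuous. Such a
function eventually stays on one side of every level outside a finite set, so if `φ` did not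
tend to `0` it would eventually be `≥ c` or `≤ -c` for some `c > 0`; then the `(M+1)`-st
difference of `θ` with step `n` at `n` would be at least `c n^(M+1)`, whereas it is a fixed
combination of the values `θ((k+1) n) = O(n ^ M)`. Hence `φ → 0`, and since `φ` is
integer-valued at large integers it vanishes there. Newton's forward difference formula then makes
`θ` agree with a rational polynomial `p` at all large integers. Finally `θ - p` is analytic and
algebraic with unbounded zeros: writing its relation as `Y^k R(x, Y)` with `R(x, 0) ≠ 0`,
isolatedness of the zeros of a nonzero analytic function gives `R(z, 0) = 0` at every large zero
`z`, which is impossible, so `θ = p`.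
-/

open Filter Polynomial Set fwdDiff Asymptotics Topology

/-- A polynomial acts on germs at `+∞` through its evaluation, so `IsAlgebraicAtTop f` says
that `Q(x, f x) = 0` for all large `x` and some nonzero `Q ∈ ℝ[X][Y]`. -/
noncomputable instance algebraGermAtTop : Algebra ℝ[X] ((atTop : Filter ℝ).Germ ℝ) :=
  ((Germ.coeRingHom atTop).comp (RingHom.pi fun x : ℝ ↦ evalRingHom x)).toAlgebra

def IsAlgebraicAtTop (f : ℝ → ℝ) : Prop :=
  IsAlgebraic ℝ[X] (f : (atTop : Filter ℝ).Germ ℝ)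

lemma aeval_coe_germ (f : ℝ → ℝ) (Q : ℝ[X][X]) :
    aeval (f : (atTop : Filter ℝ).Germ ℝ) Q = (fun x ↦ Q.eval₂ (evalRingHom x) (f x) : ℝ → ℝ) := by
  change eval₂ ((Germ.coeRingHom atTop).comp _) (Germ.coeRingHom atTop f) Q = _
  rw [← hom_eval₂]
  refine congrArg (Germ.coeRingHom atTop) (funext fun x ↦ ?_)
  exact hom_eval₂ Q _ (Pi.evalRingHom (fun _ ↦ ℝ) x) f

lemma isAlgebraicAtTop_iff {f : ℝ → ℝ} : IsAlgebraicAtTop f ↔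
    ∃ Q : ℝ[X][X], Q ≠ 0 ∧ ∀ᶠ x in atTop, Q.eval₂ (evalRingHom x) (f x) = 0 := by
  simp only [IsAlgebraicAtTop, IsAlgebraic, aeval_coe_germ, ← Germ.coe_zero, Germ.coe_eq]
  rfl

lemma isAlgebraicAtTop_of_mvPolynomial {f : ℝ → ℝ} {P : MvPolynomial (Fin 2) ℝ} (hP : P ≠ 0)
    (hrel : ∀ᶠ x in atTop, MvPolynomial.eval (fun k : Fin 2 ↦ if k = 0 then x else f x) P = 0) :
    IsAlgebraicAtTop f := by
  let Φ : MvPolynomial (Fin 2) ℝ →ₐ[ℝ] ℝ[X][X] :=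
    MvPolynomial.aeval fun k ↦ if k = 0 then C X else X
  let Ψ : ℝ[X][X] →ₐ[ℝ] MvPolynomial (Fin 2) ℝ :=
    aevalTower (aeval (MvPolynomial.X 0)) (MvPolynomial.X 1)
  have hΨΦ : Ψ.comp Φ = AlgHom.id ℝ _ :=
    MvPolynomial.algHom_ext fun k ↦ by fin_cases k <;> simp [Φ, Ψ]
  have hΦ : Function.Injective Φ := Function.LeftInverse.injective fun P ↦ congr($hΨΦ P)
  refine isAlgebraicAtTop_iff.mpr ⟨Φ P, (map_ne_zero_iff _ hΦ).mpr hP, ?_⟩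
  filter_upwards [hrel] with x hx
  have hΦeval : (eval₂RingHom (evalRingHom x) (f x)).comp (Φ : _ →+* ℝ[X][X]) =
      MvPolynomial.eval fun k : Fin 2 ↦ if k = 0 then x else f x :=
    MvPolynomial.ringHom_ext (fun r ↦ by simp [Φ]) fun k ↦ by fin_cases k <;> simp [Φ]
  rw [← hx, ← hΦeval]
  rfl

lemma IsAlgebraicAtTop.comp_add_const {f : ℝ → ℝ} (hf : IsAlgebraicAtTop f) (c : ℝ) :
    IsAlgebraicAtTop fun x ↦ f (x + c) := by
  obtain ⟨Q, hQ, hrel⟩ := isAlgebraicAtTop_iff.mp hf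
  have hinj : Function.Injective (compRingHom (X + C c)) :=
    (injective_iff_map_eq_zero _).mpr fun p hp ↦ comp_X_add_C_eq_zero_iff.mp hp
  refine isAlgebraicAtTop_iff.mpr ⟨Q.map _, (Polynomial.map_ne_zero_iff hinj).mpr hQ, ?_⟩
  · filter_upwards [(tendsto_atTop_add_const_right _ c tendsto_id).eventually hrel] with x hx
    have hshift : (evalRingHom x).comp (compRingHom (X + C c)) = evalRingHom (x + c) :=
      RingHom.ext fun p ↦ by simp [eval_comp]
    rw [eval₂_map, hshift]
    exact hx

lemma IsAlgebraicAtTop.sub {f g : ℝ → ℝ} (hf : IsAlgebraicAtTop f) (hg : IsAlgebraicAtTop g) :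
    IsAlgebraicAtTop (f - g) :=
  IsAlgebraic.sub hf hg

lemma IsAlgebraicAtTop.neg {f : ℝ → ℝ} (hf : IsAlgebraicAtTop f) : IsAlgebraicAtTop (-f) :=
  IsAlgebraic.neg hf

lemma IsAlgebraicAtTop.sub_polynomial {f : ℝ → ℝ} (hf : IsAlgebraicAtTop f) (p : ℝ[X]) :
    IsAlgebraicAtTop fun x ↦ f x - p.eval x :=
  IsAlgebraic.sub hf (isAlgebraic_algebraMap p)

lemma IsAlgebraicAtTop.fwdDiff_iter {f : ℝ → ℝ} (hf : IsAlgebraicAtTop f) (h : ℝ) (n : ℕ) :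
    IsAlgebraicAtTop (Δ_[h] ^[n] f) := by
  induction n with
  | zero => exact hf
  | succ n ih =>
    rw [Function.iterate_succ_apply']
    exact (ih.comp_add_const h).sub ih

lemma abs_leadingCoeff_mul_abs_le_of_isRoot {p : ℝ[X]} {y : ℝ} (h : p.IsRoot y) :
    |p.leadingCoeff| * |y| ≤ ∑ i ∈ Finset.range (p.natDegree + 1), |p.coeff i| := by
  rcases eq_or_ne p 0 with rfl | hp
  · simp
  have hℓ : ‖p.leadingCoeff‖₊ ≠ 0 := by simpa using hp
  have hsup : (Finset.range p.natDegree).sup (‖p.coeff ·‖₊) ≤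
      ∑ i ∈ Finset.range p.natDegree, ‖p.coeff i‖₊ :=
    Finset.sup_le fun i hi ↦ Finset.single_le_sum (f := (‖p.coeff ·‖₊)) (fun _ _ ↦ bot_le) hi
  have key : ‖p.leadingCoeff‖₊ * ‖y‖₊ ≤ ∑ i ∈ Finset.range (p.natDegree + 1), ‖p.coeff i‖₊ := by
    calc ‖p.leadingCoeff‖₊ * ‖y‖₊ ≤ ‖p.leadingCoeff‖₊ * cauchyBound p := by
          gcongr
          exact (h.norm_lt_cauchyBound hp).le
      _ = (Finset.range p.natDegree).sup (‖p.coeff ·‖₊) + ‖p.leadingCoeff‖₊ := by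
          rw [cauchyBound, mul_add, mul_div_cancel₀ _ hℓ, mul_one]
      _ ≤ _ := by
          rw [Finset.sum_range_succ, coeff_natDegree]
          gcongr
  simpa only [← NNReal.coe_le_coe, NNReal.coe_mul, NNReal.coe_sum, coe_nnnorm,
    Real.norm_eq_abs] using key

lemma IsAlgebraicAtTop.isBigO_pow {f : ℝ → ℝ} (hf : IsAlgebraicAtTop f) :
    ∃ M : ℕ, f =O[atTop] (· ^ M) := by
  obtain ⟨Q, hQ, hrel⟩ := isAlgebraicAtTop_iff.mp hf
  have hℓ : Q.leadingCoeff ≠ 0 := leadingCoeff_ne_zero.mpr hQ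
  set s := Finset.range (Q.natDegree + 1)
  set M := s.sup fun i ↦ (Q.coeff i).natDegree
  refine ⟨M, ?_⟩
  have hcoeff : ∀ i ∈ s, (fun x ↦ |(Q.coeff i).eval x|) =O[atTop] (· ^ M) := fun i hi ↦ by
    have hdeg : (Q.coeff i).degree ≤ (X ^ M : ℝ[X]).degree := by
      rw [degree_X_pow]
      exact degree_le_of_natDegree_le (Finset.le_sup (f := fun i ↦ (Q.coeff i).natDegree) hi)
    simpa using (isBigO_atTop_of_degree_le _ _ hdeg).abs_left
  have hroot : (fun x ↦ f x * Q.leadingCoeff.eval x) =O[atTop]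
      fun x ↦ ∑ i ∈ s, |(Q.coeff i).eval x| := by
    refine IsBigO.of_bound 1 ?_
    filter_upwards [hrel, eventually_atTop_not_isRoot _ hℓ] with x hx hℓx
    have hℓx' : evalRingHom x Q.leadingCoeff ≠ 0 := hℓx
    have := abs_leadingCoeff_mul_abs_le_of_isRoot (p := Q.map (evalRingHom x)) (y := f x)
      (by rwa [IsRoot, eval_map])
    rw [natDegree_map_of_leadingCoeff_ne_zero _ hℓx',
      leadingCoeff_map_of_leadingCoeff_ne_zero _ hℓx'] at this
    simp only [coeff_map, coe_evalRingHom] at this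
    rw [Real.norm_eq_abs, Real.norm_eq_abs, abs_mul, one_mul,
      abs_of_nonneg (a := ∑ i ∈ s, _) (Finset.sum_nonneg fun i _ ↦ abs_nonneg _), mul_comm]
    exact this
  have hone : (fun _ ↦ (1 : ℝ)) =O[atTop] fun x ↦ Q.leadingCoeff.eval x := by
    simpa using isBigO_atTop_of_degree_le (C 1) _ (by simpa using zero_le_degree_iff.mpr hℓ)
  calc f = fun x ↦ f x * 1 := by simp
    _ =O[atTop] fun x ↦ f x * Q.leadingCoeff.eval x := (isBigO_refl f atTop).mul hone
    _ =O[atTop] _ := hroot.trans (by simpa only [Finset.sum_fn] using IsBigO.sum hcoeff)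

lemma IsAlgebraicAtTop.eventually_cofinite_eventually_ne {f : ℝ → ℝ} (hf : IsAlgebraicAtTop f) :
    ∀ᶠ c in cofinite, ∀ᶠ x in atTop, f x ≠ c := by
  obtain ⟨Q, hQ, hrel⟩ := isAlgebraicAtTop_iff.mp hf
  have hbad : {c : ℝ | Q.IsRoot (C c)}.Finite :=
    (finite_setOfPred_isRoot hQ).preimage C_injective.injOn
  filter_upwards [hbad.eventually_cofinite_notMem] with c hc
  filter_upwards [hrel, eventually_atTop_not_isRoot _ hc] with x hx hcx hfx
  rw [hfx, ← eval_C (a := c) (x := x), ← coe_evalRingHom, eval₂_at_apply] at hx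
  exact hcx hx

lemma ContinuousOn.fwdDiff_iter {f : ℝ → ℝ} {a h : ℝ} (hf : ContinuousOn f (Ioi a)) (hh : 0 ≤ h)
    (n : ℕ) : ContinuousOn (Δ_[h] ^[n] f) (Ioi a) := by
  induction n with
  | zero => exact hf
  | succ n ih =>
    rw [Function.iterate_succ_apply']
    exact (ih.comp (continuous_add_const h).continuousOn
      fun x (hx : a < x) ↦ show a < x + h by linarith).sub ih

lemma ContinuousOn.eventually_lt_or_eventually_gt {f : ℝ → ℝ} {a c : ℝ}
    (hf : ContinuousOn f (Ioi a)) (hc : ∀ᶠ x in atTop, f x ≠ c) :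
    (∀ᶠ x in atTop, f x < c) ∨ ∀ᶠ x in atTop, c < f x := by
  obtain ⟨R, hR⟩ := eventually_atTop.mp (hc.and (eventually_gt_atTop a))
  have hpre : IsPreconnected (f '' Ici R) :=
    isPreconnected_Ici.image f (hf.mono fun x hx ↦ (hR x hx).2)
  have hcR : c ∉ f '' Ici R := fun ⟨x, hx, hfx⟩ ↦ (hR x hx).1 hfx
  have hmem : ∀ x ≥ R, f x ∈ f '' Ici R := fun x hx ↦ mem_image_of_mem f hx
  rcases (hR R le_rfl).1.lt_or_gt with hlt | hgt
  · refine .inl (eventually_atTop.mpr ⟨R, fun x hx ↦ not_le.mp fun hle ↦ hcR ?_⟩)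
    exact hpre.Icc_subset (hmem R le_rfl) (hmem x hx) ⟨hlt.le, hle⟩
  · refine .inr (eventually_atTop.mpr ⟨R, fun x hx ↦ not_le.mp fun hle ↦ hcR ?_⟩)
    exact hpre.Icc_subset (hmem x hx) (hmem R le_rfl) ⟨hle, hgt.le⟩

section ForwardDifference

variable {M G : Type*} [AddCommMonoid M] [AddCommGroup G]

lemma fwdDiff_commute (h h' : M) : Function.Commute (fwdDiff (G := G) h) (fwdDiff h') :=
  fun f ↦ funext fun y ↦ by simp only [fwdDiff, add_right_comm]; abel

lemma fwdDiff_nsmul_eq_sum (h : M) (f : M → G) (n : ℕ) (y : M) :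
    Δ_[n • h] f y = ∑ j ∈ Finset.range n, Δ_[h] f (y + j • h) := by
  have hstep : ∀ j : ℕ, Δ_[h] f (y + j • h) = f (y + (j + 1) • h) - f (y + j • h) :=
    fun j ↦ by rw [fwdDiff, succ_nsmul, add_assoc]
  rw [Finset.sum_congr rfl fun j _ ↦ hstep j, Finset.sum_range_sub (fun j ↦ f (y + j • h))]
  simp [fwdDiff]

end ForwardDifference

lemma mul_pow_le_fwdDiff_iter {f : ℝ → ℝ} {R c : ℝ} {K : ℕ} (hf : ∀ x ≥ R, c ≤ Δ_[1] ^[K] f x)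
    (n : ℕ) {x : ℝ} (hx : R ≤ x) : c * n ^ K ≤ Δ_[(n : ℝ)] ^[K] f x := by
  induction K generalizing f c with
  | zero => simpa using hf x hx
  | succ K ih =>
    rw [Function.iterate_succ_apply, pow_succ, mul_comm _ (n : ℝ), ← mul_assoc]
    refine ih (fun y hy ↦ ?_)
    rw [(fwdDiff_commute _ _).iterate_left, ← nsmul_one, fwdDiff_nsmul_eq_sum]
    calc c * (n • (1 : ℝ)) = (Finset.range n).card • c := by simp [mul_comm]
      _ ≤ ∑ j ∈ Finset.range n, Δ_[1] (Δ_[1] ^[K] f) (y + j • 1) := by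
        refine Finset.card_nsmul_le_sum _ _ _ fun j _ ↦ ?_
        rw [← Function.iterate_succ_apply' (Δ_[1])]
        exact hf _ (by simp only [nsmul_one]; linarith [(Nat.cast_nonneg j : (0 : ℝ) ≤ j)])

lemma not_eventually_le_fwdDiff_iter {f : ℝ → ℝ} {M : ℕ} (hf : f =O[atTop] (· ^ M)) {c : ℝ}
    (hc : 0 < c) : ¬ ∀ᶠ x in atTop, c ≤ Δ_[1] ^[M + 1] f x := by
  intro hev
  obtain ⟨R, hR⟩ := eventually_atTop.mp hev
  set u : ℕ → ℝ := fun n ↦ Δ_[(n : ℝ)] ^[M + 1] f n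
  have hterm : ∀ k : ℕ, (fun n : ℕ ↦ f (n + k • (n : ℝ))) =O[atTop] fun n : ℕ ↦ (n : ℝ) ^ M := by
    intro k
    have ht : Tendsto (fun n : ℕ ↦ ((k : ℝ) + 1) * n) atTop atTop :=
      tendsto_natCast_atTop_atTop.const_mul_atTop (by positivity)
    refine ((hf.comp_tendsto ht).congr_left fun n ↦ ?_).trans ?_
    · simp only [Function.comp, nsmul_eq_mul]
      ring_nf
    · simpa only [Function.comp_def, mul_pow] using
        isBigO_const_mul_self (((k : ℝ) + 1) ^ M) (fun n : ℕ ↦ (n : ℝ) ^ M) atTop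
  have hupper : u =O[atTop] fun n : ℕ ↦ (n : ℝ) ^ M := by
    have := IsBigO.sum (s := Finset.range (M + 2)) fun k _ ↦
      (hterm k).const_smul_left ((-1 : ℤ) ^ (M + 1 - k) * (M + 1).choose k)
    simpa only [u, fwdDiff_iter_eq_sum_shift, Finset.sum_fn, Pi.smul_def] using this
  have hlower : (fun n : ℕ ↦ (n : ℝ) ^ (M + 1)) =O[atTop] u := by
    refine IsBigO.of_bound c⁻¹ ?_
    filter_upwards [tendsto_natCast_atTop_atTop.eventually_ge_atTop R] with n hn
    have hu := mul_pow_le_fwdDiff_iter hR n hn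
    rw [Real.norm_eq_abs, Real.norm_eq_abs, abs_of_nonneg (by positivity),
      le_inv_mul_iff₀ hc]
    exact hu.trans (le_abs_self _)
  have hlittle : (fun n : ℕ ↦ (n : ℝ) ^ M) =o[atTop] fun n ↦ (n : ℝ) ^ (M + 1) :=
    (isLittleO_pow_pow_atTop_of_lt M.lt_succ_self).comp_tendsto tendsto_natCast_atTop_atTop
  refine isLittleO_irrefl ?_ (hlower.trans_isLittleO (hupper.trans_isLittleO hlittle))
  refine (eventually_ge_atTop 1).frequently.mono fun n hn ↦ ?_
  positivity

lemma IsAlgebraicAtTop.eventually_fwdDiff_iter_lt {f : ℝ → ℝ} {a : ℝ} {M : ℕ}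
    (hf : IsAlgebraicAtTop f) (hcont : ContinuousOn f (Ioi a)) (hM : f =O[atTop] (· ^ M))
    {ε : ℝ} (hε : 0 < ε) : ∀ᶠ x in atTop, Δ_[1] ^[M + 1] f x < ε := by
  obtain ⟨c, ⟨hc0, hcε⟩, hc⟩ :=
    ((frequently_cofinite_iff_infinite.mpr (Ioo_infinite hε)).and_eventually
      (hf.fwdDiff_iter 1 (M + 1)).eventually_cofinite_eventually_ne).exists
  rcases (hcont.fwdDiff_iter zero_le_one (M + 1)).eventually_lt_or_eventually_gt hc with h | h
  · exact h.mono fun x hx ↦ hx.trans hcε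
  · exact absurd (h.mono fun x hx ↦ hx.le) (not_eventually_le_fwdDiff_iter hM hc0)

lemma IsAlgebraicAtTop.tendsto_fwdDiff_iter {f : ℝ → ℝ} {a : ℝ} {M : ℕ} (hf : IsAlgebraicAtTop f)
    (hcont : ContinuousOn f (Ioi a)) (hM : f =O[atTop] (· ^ M)) :
    Tendsto (Δ_[1] ^[M + 1] f) atTop (𝓝 0) := by
  refine tendsto_order.mpr ⟨fun ε hε ↦ ?_, fun ε ↦ hf.eventually_fwdDiff_iter_lt hcont hM⟩
  filter_upwards [hf.neg.eventually_fwdDiff_iter_lt hcont.neg hM.neg_left (neg_pos.mpr hε)]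
    with x hx
  rw [← neg_one_smul ℝ f, fwdDiff_iter_const_smul, Pi.smul_apply, neg_one_smul] at hx
  linarith

lemma exists_fwdDiff_iter_eq_intCast {f : ℝ → ℝ} {y : ℝ} (hf : ∀ m : ℕ, ∃ z : ℤ, f (y + m) = z)
    (k : ℕ) : ∃ z : ℤ, Δ_[1] ^[k] f y = z := by
  choose z hz using hf
  refine ⟨∑ j ∈ Finset.range (k + 1), (-1) ^ (k - j) * k.choose j * z j, ?_⟩
  simp [fwdDiff_iter_eq_sum_shift, hz, zsmul_eq_mul]

lemma eq_sum_choose_mul_of_fwdDiff_iter_eq_zero {f : ℝ → ℝ} {y : ℝ} {K : ℕ}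
    (hK : ∀ m : ℕ, Δ_[1] ^[K] f (y + m) = 0) (n : ℕ) :
    f (y + n) = ∑ k ∈ Finset.range K, (n.choose k : ℝ) * Δ_[1] ^[k] f y := by
  have hvanish : ∀ k, K ≤ k → Δ_[1] ^[k] f y = 0 := by
    intro k hk
    obtain ⟨j, rfl⟩ := Nat.exists_eq_add_of_le hk
    rw [add_comm, Function.iterate_add_apply, fwdDiff_iter_eq_sum_shift]
    exact Finset.sum_eq_zero fun i _ ↦ by rw [nsmul_one, hK, smul_zero]
  have hnewton := shift_eq_sum_fwdDiff_iter (1 : ℝ) f n y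
  rw [nsmul_one] at hnewton
  rw [hnewton]
  calc ∑ k ∈ Finset.range (n + 1), n.choose k • Δ_[1] ^[k] f y
      = ∑ k ∈ Finset.range (n + 1 + K), (n.choose k : ℝ) * Δ_[1] ^[k] f y := by
        simp_rw [nsmul_eq_mul]
        refine Finset.sum_subset (Finset.range_subset_range.mpr (by omega)) fun k _ hk ↦ ?_
        rw [Nat.choose_eq_zero_of_lt (by simpa using hk), Nat.cast_zero, zero_mul]
    _ = ∑ k ∈ Finset.range K, (n.choose k : ℝ) * Δ_[1] ^[k] f y := by
        refine (Finset.sum_subset (Finset.range_subset_range.mpr (by omega)) fun k _ hk ↦ ?_).symm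
        rw [hvanish k (by simpa using hk), mul_zero]

lemma exists_rat_polynomial_of_fwdDiff_iter_eq_zero {f : ℝ → ℝ} {N K : ℕ}
    (hK : ∀ m : ℕ, Δ_[1] ^[K] f (N + m) = 0) (hf : ∀ k < K, ∃ r : ℚ, Δ_[1] ^[k] f N = r) :
    ∃ q : ℚ[X], ∀ n : ℕ, f (N + n) = (q.map (algebraMap ℚ ℝ)).eval (N + n : ℝ) := by
  set p : ℝ[X] := ∑ k ∈ Finset.range K,
    C (Δ_[1] ^[k] f N / k.factorial) * (descPochhammer ℝ k).comp (X - C (N : ℝ))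
  have hp : p ∈ (mapRingHom (algebraMap ℚ ℝ)).range := by
    refine Subring.sum_mem _ fun k hk ↦ Subring.mul_mem _ ?_ ?_
    · obtain ⟨r, hr⟩ := hf k (Finset.mem_range.mp hk)
      exact ⟨C (r / k.factorial), by simp [hr]⟩
    · exact ⟨(descPochhammer ℚ k).comp (X - C (N : ℚ)), by simp [map_comp, descPochhammer_map]⟩
  obtain ⟨q, hq⟩ := hp
  refine ⟨q, fun n ↦ ?_⟩
  rw [eq_sum_choose_mul_of_fwdDiff_iter_eq_zero hK n, ← coe_mapRingHom, hq, eval_finsetSum]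
  refine Finset.sum_congr rfl fun k _ ↦ ?_
  rw [Nat.cast_choose_eq_descPochhammer_div ℝ]
  simp only [eval_mul, eval_C, eval_comp, eval_sub, eval_X, add_sub_cancel_left]
  ring

lemma AnalyticOnNhd.eqOn_zero_of_isAlgebraicAtTop {h : ℝ → ℝ} {a : ℝ}
    (han : AnalyticOnNhd ℝ h (Ioi a)) (halg : IsAlgebraicAtTop h)
    (hzero : ∃ᶠ x in atTop, h x = 0) : EqOn h 0 (Ioi a) := by
  by_contra hne
  have hisol : ∀ z ∈ Ioi a, ∀ᶠ w in 𝓝[≠] z, h w ≠ 0 := fun z hz ↦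
    (han z hz).eventually_eq_zero_or_eventually_ne_zero.resolve_left fun hev ↦
      hne (han.eqOn_zero_of_preconnected_of_eventuallyEq_zero isPreconnected_Ioi hz hev)
  obtain ⟨Q, hQ, hrel⟩ := isAlgebraicAtTop_iff.mp halg
  obtain ⟨R, hQR, hR⟩ := exists_eq_pow_rootMultiplicity_mul_and_not_dvd Q hQ 0
  have hR0 : R.coeff 0 ≠ 0 := by simpa [X_dvd_iff] using hR
  set G : ℝ → ℝ := fun x ↦ R.eval₂ (evalRingHom x) (h x)
  have hGrel : ∀ᶠ x in atTop, h x = 0 ∨ G x = 0 := by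
    filter_upwards [hrel] with x hx
    rw [hQR, eval₂_mul, eval₂_pow, eval₂_sub, eval₂_X, eval₂_C, map_zero, sub_zero] at hx
    exact (mul_eq_zero.mp hx).imp_left fun h0 ↦ pow_eq_zero_iff'.mp h0 |>.1
  have hGcont : ∀ z ∈ Ioi a, ContinuousAt G z := fun z hz ↦ by
    have := (han z hz).continuousAt
    simp only [G, eval₂_eq_sum_range, coe_evalRingHom]
    fun_prop
  obtain ⟨R₀, hR₀⟩ := eventually_atTop.mp (hGrel.and (eventually_gt_atTop a))
  have hroots : ∃ᶠ z in atTop, (R.coeff 0).IsRoot z := by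
    refine (hzero.and_eventually (eventually_gt_atTop R₀)).mono fun z ⟨hz, hzR⟩ ↦ ?_
    have hza : a < z := (hR₀ R₀ le_rfl).2.trans hzR
    have hGnear : ∀ᶠ w in 𝓝[≠] z, G w = 0 := by
      filter_upwards [hisol z hza, nhdsWithin_le_nhds (Ioi_mem_nhds hzR)] with w hw hwR
      exact (hR₀ w (le_of_lt hwR)).1.resolve_left hw
    have hGz : G z = 0 := tendsto_nhds_unique
      ((hGcont z hza).tendsto.mono_left nhdsWithin_le_nhds)
      (tendsto_const_nhds.congr' (hGnear.mono fun w hw ↦ hw.symm))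
    simpa [G, hz, eval₂_at_zero] using hGz
  obtain ⟨z, hz, hz'⟩ := (hroots.and_eventually (eventually_atTop_not_isRoot _ hR0)).exists
  exact hz' hz

/-- A real algebraic function θ, analytic on (a,∞), taking integer values at
    all sufficiently large integers, is a polynomial with rational coefficients. -/
theorem algebraic_integer_valued_is_polynomial (a : ℝ) (θ : ℝ → ℝ)
    (hθ : AnalyticOn ℝ θ (Set.Ioi a))
    (P : MvPolynomial (Fin 2) ℝ) (hP : P ≠ 0)
    (halg : ∀ x > a, MvPolynomial.eval (fun k : Fin 2 => if k = 0 then x else θ x) P = 0)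
    (hint : ∃ N : ℕ, ∀ n : ℕ, N ≤ n → (a < n) → ∃ m : ℤ, θ n = m) :
    ∃ q : Polynomial ℚ, ∀ x > a, θ x = (q.map (algebraMap ℚ ℝ)).eval x := by
  obtain ⟨N, hN⟩ := hint
  have han : AnalyticOnNhd ℝ θ (Ioi a) := isOpen_Ioi.analyticOn_iff_analyticOnNhd.mp hθ
  have hθalg : IsAlgebraicAtTop θ :=
    isAlgebraicAtTop_of_mvPolynomial hP ((eventually_gt_atTop a).mono halg)
  obtain ⟨M, hM⟩ := hθalg.isBigO_pow
  obtain ⟨R, hR⟩ := eventually_atTop.mp <|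
    (hθalg.tendsto_fwdDiff_iter han.continuousOn hM).eventually
      (Ioo_mem_nhds neg_one_lt_zero one_pos)
  obtain ⟨N', hN'N, hN'a, hN'R⟩ : ∃ N' : ℕ, N ≤ N' ∧ a < N' ∧ R ≤ N' :=
    ((eventually_ge_atTop N).and ((tendsto_natCast_atTop_atTop.eventually_gt_atTop a).and
      (tendsto_natCast_atTop_atTop.eventually_ge_atTop R))).exists
  have hθint : ∀ m j : ℕ, ∃ z : ℤ, θ ((N' + m : ℝ) + j) = z := fun m j ↦ by
    exact_mod_cast hN (N' + m + j) (by omega) (hN'a.trans_le (by norm_cast; omega))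
  have hφzero : ∀ m : ℕ, Δ_[1] ^[M + 1] θ (N' + m) = 0 := by
    intro m
    obtain ⟨z, hz⟩ := exists_fwdDiff_iter_eq_intCast (hθint m) (M + 1)
    have hz1 := hR (N' + m) (by linarith [(Nat.cast_nonneg m : (0 : ℝ) ≤ m)])
    rw [hz] at hz1 ⊢
    have : -1 < z ∧ z < 1 := by exact_mod_cast hz1
    simp [show z = 0 by omega]
  obtain ⟨q, hq⟩ := exists_rat_polynomial_of_fwdDiff_iter_eq_zero hφzero fun k _ ↦ by
    obtain ⟨z, hz⟩ := exists_fwdDiff_iter_eq_intCast (y := N') (fun j ↦ by simpa using hθint 0 j) k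
    exact ⟨z, by simpa using hz⟩
  refine ⟨q, fun x hx ↦ sub_eq_zero.mp ?_⟩
  have hpan := (AnalyticOnNhd.eval_polynomial (𝕜 := ℝ) (q.map (algebraMap ℚ ℝ))).mono
    (subset_univ (Ioi a))
  refine (han.sub hpan).eqOn_zero_of_isAlgebraicAtTop (hθalg.sub_polynomial _) ?_ hx
  refine (tendsto_atTop_add_const_left _ (N' : ℝ) tendsto_natCast_atTop_atTop).frequently
    (Frequently.of_forall fun n ↦ ?_)
  simp [hq n]
end

section
/- Let θ_i and θ_j be two real algebraic functions analytic on (a, ∞) such that |θ_i(x) − θ_j(x)| < 2c₀·e^{−3x} for all sufficiently large x, where c₀ > 0. Then θ_i = θ_j on (a', ∞) for some a' ≥ a. -/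
/-!
In the ring of germs at `+∞` of real functions, viewed as an `ℝ[X]`-algebra, `θᵢ` and `θⱼ` are
algebraic, hence so is `g = θᵢ - θⱼ` (algebraic elements over a domain form a subring even though
the germ ring has zero divisors). Splitting off the largest power of `g` from a relation
`q(x, g(x)) = 0` leaves `r₀(x) + g(x) s(x, g(x)) = 0` wherever `g(x) ≠ 0`, with `r₀ ≠ 0`. As
`g = O(e^{-3x})` decays faster than any polynomial, `g · s(·, g) → 0`, while the nonzero polynomial
`r₀` stays away from `0` at `+∞`; so `g` vanishes eventually.
-/

open Filter Polynomial Topology Asymptotics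

namespace MvPolynomial

variable {R : Type*} [CommRing R]

noncomputable def toBivariate : MvPolynomial (Fin 2) R →ₐ[R] R[X][X] :=
  aeval fun k => if k = 0 then Polynomial.C Polynomial.X else Polynomial.X

theorem evalEval_toBivariate (P : MvPolynomial (Fin 2) R) (x y : R) :
    (toBivariate P).evalEval x y = eval (fun k => if k = 0 then x else y) P := by
  show (evalEvalRingHom x y).comp (toBivariate (R := R)).toRingHom P = _
  congr 1
  refine ringHom_ext (fun r => ?_) (fun i => ?_)
  · simp [toBivariate]
  · fin_cases i <;> simp [toBivariate]

theorem toBivariate_injective : Function.Injective (toBivariate (R := R)) := by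
  let ofBivariate : R[X][X] →+* MvPolynomial (Fin 2) R :=
    eval₂RingHom (eval₂RingHom C (X 0)) (X 1)
  refine Function.LeftInverse.injective (g := ofBivariate) fun P => ?_
  show ofBivariate.comp (toBivariate (R := R)).toRingHom P = RingHom.id _ P
  congr 1
  refine ringHom_ext (fun r => ?_) (fun i => ?_)
  · simp [toBivariate, ofBivariate]
  · fin_cases i <;> simp [toBivariate, ofBivariate]

end MvPolynomial

namespace Filter.Germ

variable {R : Type*} [CommRing R] {l : Filter R}

noncomputable instance : Algebra R[X] (Germ l R) :=
  ((coeRingHom l).comp (RingHom.pi fun x => Polynomial.evalRingHom x)).toAlgebra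

theorem aeval_coe (q : R[X][X]) (g : R → R) :
    aeval (g : Germ l R) q = ↑(fun x => q.evalEval x (g x)) := by
  show (aeval (g : Germ l R)).toRingHom q =
    (coeRingHom l).comp (RingHom.pi fun x => evalEvalRingHom x (g x)) q
  congr 1
  refine Polynomial.ringHom_ext (fun p => ?_) ?_
  · rw [AlgHom.toRingHom_eq_coe, RingHom.coe_coe, aeval_C]
    exact congrArg (coeRingHom l) (funext fun x => (evalEval_C x (g x) p).symm)
  · rw [AlgHom.toRingHom_eq_coe, RingHom.coe_coe, aeval_X]
    exact congrArg (coeRingHom l) (funext fun x => (evalEval_X x (g x)).symm)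

theorem isAlgebraic_coe_of_eventually_eval_eq_zero {θ : R → R} {P : MvPolynomial (Fin 2) R}
    (hP : P ≠ 0) (h : ∀ᶠ x in l, MvPolynomial.eval (fun k => if k = 0 then x else θ x) P = 0) :
    IsAlgebraic R[X] (θ : Germ l R) := by
  refine ⟨MvPolynomial.toBivariate P,
    (map_ne_zero_iff _ MvPolynomial.toBivariate_injective).mpr hP, ?_⟩
  rw [aeval_coe]
  exact coe_eq.mpr (h.mono fun x hx => (MvPolynomial.evalEval_toBivariate P x (θ x)).trans hx)

end Filter.Germ

namespace Asymptotics.SuperpolynomialDecay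

theorem pow_succ {α β : Type*} [CommSemiring β] [TopologicalSpace β] [ContinuousMul β]
    {l : Filter α} {k f : α → β} (hf : SuperpolynomialDecay l k f) (n : ℕ) : SuperpolynomialDecay l k (f ^ (n + 1)) := by
  induction n with
  | zero => simpa using hf
  | succ n ih => rw [_root_.pow_succ]; exact ih.mul hf

theorem mul_evalEval {R : Type*} [CommRing R] [TopologicalSpace R] [IsTopologicalRing R]
    {l : Filter R} {g : R → R} (hg : SuperpolynomialDecay l id g) (q : R[X][X]) :
    SuperpolynomialDecay l id fun x => g x * q.evalEval x (g x) := by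
  induction q using Polynomial.induction_on' with
  | add p q hp hq =>
    refine (hp.add hq).congr fun x => ?_
    simp only [Pi.add_apply, evalEval_add, mul_add]
  | monomial n p =>
    refine ((hg.pow_succ n).polynomial_mul p).congr fun x => ?_
    simp only [id_eq, Pi.pow_apply, evalEval, eval_monomial, eval_mul, eval_pow, eval_C]
    ring

end Asymptotics.SuperpolynomialDecay

theorem Real.superpolynomialDecay_exp_neg_mul {b : ℝ} (hb : 0 < b) :
    SuperpolynomialDecay atTop id fun x => Real.exp (-b * x) := fun n => by
  simpa using tendsto_rpow_mul_exp_neg_mul_atTop_nhds_zero n b hb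

theorem Polynomial.exists_pos_eventually_le_abs_eval {p : ℝ[X]} (hp : p ≠ 0) :
    ∃ ε > 0, ∀ᶠ x in atTop, ε ≤ |p.eval x| := by
  by_cases hdeg : 0 < p.degree
  · exact ⟨1, one_pos, (p.abs_tendsto_atTop hdeg).eventually_ge_atTop 1⟩
  · rw [eq_C_of_degree_le_zero (not_lt.mp hdeg)] at hp ⊢
    exact ⟨_, abs_pos.mpr (C_ne_zero.mp hp), .of_forall fun x => by simp⟩

theorem eventuallyEq_zero_of_isAlgebraic_of_superpolynomialDecay {g : ℝ → ℝ}
    (halg : IsAlgebraic ℝ[X] (g : Germ (atTop : Filter ℝ) ℝ))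
    (hdecay : SuperpolynomialDecay atTop id g) :
    g =ᶠ[atTop] 0 := by
  obtain ⟨q, hq0, hq⟩ := halg
  obtain ⟨r, hqr, hXr⟩ := q.exists_eq_pow_rootMultiplicity_mul_and_not_dvd hq0 0
  rw [map_zero, sub_zero, X_dvd_iff] at hXr
  have hrel : ∀ᶠ x in atTop, g x ^ q.rootMultiplicity 0 * r.evalEval x (g x) = 0 := by
    rw [Germ.aeval_coe] at hq
    filter_upwards [Germ.coe_eq.mp hq] with x hx
    rwa [hqr, map_zero, sub_zero, evalEval_mul, evalEval_pow, evalEval_X] at hx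
  have hsplit :
      ∀ x, r.evalEval x (g x) = (r.coeff 0).eval x + g x * r.divX.evalEval x (g x) := by
    intro x
    conv_lhs => rw [← divX_mul_X_add r]
    simp only [evalEval_add, evalEval_mul, evalEval_X, evalEval_C]
    ring
  have htail : Tendsto (fun x => g x * r.divX.evalEval x (g x)) atTop (𝓝 0) := by
    simpa using hdecay.mul_evalEval r.divX 0
  obtain ⟨ε, hε, hlow⟩ := exists_pos_eventually_le_abs_eval hXr
  have hsmall := ((tendsto_zero_iff_abs_tendsto_zero _).mp htail).eventually_lt_const hε
  filter_upwards [hrel, hlow, hsmall] with x hrelx hlowx hsmallx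
  have hr : r.evalEval x (g x) ≠ 0 := by
    rw [hsplit]
    intro h
    rw [add_eq_zero_iff_eq_neg.mp h, abs_neg] at hlowx
    exact hlowx.not_gt hsmallx
  exact IsNilpotent.eq_zero ⟨_, (mul_eq_zero.mp hrelx).resolve_right hr⟩

theorem algebraic_close_eventually_equal_general (a : ℝ) (θi θj : ℝ → ℝ)
    (Pi : MvPolynomial (Fin 2) ℝ) (hPi : Pi ≠ 0)
    (halgi : ∀ x > a, MvPolynomial.eval (fun k : Fin 2 => if k = 0 then x else θi x) Pi = 0)
    (Pj : MvPolynomial (Fin 2) ℝ) (hPj : Pj ≠ 0)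
    (halgj : ∀ x > a, MvPolynomial.eval (fun k : Fin 2 => if k = 0 then x else θj x) Pj = 0)
    (c₀ : ℝ)
    (hclose : ∃ x₀, ∀ x, x₀ ≤ x → x > a → |θi x - θj x| < 2 * c₀ * Real.exp (-3 * x)) :
    ∃ a', a ≤ a' ∧ ∀ x > a', θi x = θj x := by
  obtain ⟨x₀, hx₀⟩ := hclose
  have halg : IsAlgebraic ℝ[X] ((θi : Germ (atTop : Filter ℝ) ℝ) - θj) :=
    (Germ.isAlgebraic_coe_of_eventually_eval_eq_zero hPi ((eventually_gt_atTop a).mono halgi)).sub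
      (Germ.isAlgebraic_coe_of_eventually_eval_eq_zero hPj ((eventually_gt_atTop a).mono halgj))
  have hdecay : SuperpolynomialDecay atTop id (θi - θj) := by
    refine ((Real.superpolynomialDecay_exp_neg_mul three_pos).const_mul (2 * c₀))
      |>.trans_eventually_abs_le ?_
    filter_upwards [eventually_ge_atTop x₀, eventually_gt_atTop a] with x hx₀x hax
    exact (hx₀ x hx₀x hax).le.trans (le_abs_self _)
  rw [← Germ.coe_sub] at halg
  obtain ⟨b, hb⟩ :=
    eventually_atTop.mp (eventuallyEq_zero_of_isAlgebraic_of_superpolynomialDecay halg hdecay)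
  exact ⟨max a b, le_max_left a b,
    fun x hx => sub_eq_zero.mp (hb x ((le_max_right a b).trans hx.le))⟩

/-- Two real algebraic functions analytic on (a,∞) which are exponentially
    close (|θᵢ(x) − θⱼ(x)| < 2c₀ e^{−3x} for all sufficiently large x)
    eventually coincide. -/
theorem algebraic_close_eventually_equal (a : ℝ) (θi θj : ℝ → ℝ)
    (hθi : AnalyticOn ℝ θi (Set.Ioi a)) (hθj : AnalyticOn ℝ θj (Set.Ioi a))
    (Pi : MvPolynomial (Fin 2) ℝ) (hPi : Pi ≠ 0)
    (halgi : ∀ x > a, MvPolynomial.eval (fun k : Fin 2 => if k = 0 then x else θi x) Pi = 0)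
    (Pj : MvPolynomial (Fin 2) ℝ) (hPj : Pj ≠ 0)
    (halgj : ∀ x > a, MvPolynomial.eval (fun k : Fin 2 => if k = 0 then x else θj x) Pj = 0)
    (c₀ : ℝ) (hc₀ : 0 < c₀)
    (hclose : ∃ x₀, ∀ x, x₀ ≤ x → x > a → |θi x - θj x| < 2 * c₀ * Real.exp (-3 * x)) :
    ∃ a', a ≤ a' ∧ ∀ x > a', θi x = θj x :=
  algebraic_close_eventually_equal_general a θi θj Pi hPi halgi Pj hPj halgj c₀ hclose
end

section
/- Let N ≥ 2 and let a_1, ..., a_N be pairwise distinct integers with |a_i| ≤ T/2 for all i, where T is a positive real. Then for each n ≤ N, ∏_{k ≠ n} |a_k|/|a_k − a_n| ≤ ((T/2)^{N−1} · 2^{N−1}) / (N−1)!. -/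
/-!
The numerator is at most `(T/2)^(N-1)` termwise. The differences `a k - a n` in the denominator
are `N - 1` distinct nonzero integers; `m` distinct nonzero integers lie in `[-r, r]` for `r` the
largest absolute value among them, so `m ≤ 2r`, and inducting on `m` gives
`m! ≤ ∏ 2|x|`, i.e. the denominator is at least `(N-1)! / 2^(N-1)`.
-/

open Finset
open scoped Nat

namespace Int

theorem card_le_two_mul_of_abs_le {s : Finset ℤ} (h0 : 0 ∉ s) {r : ℤ} (hr0 : 0 ≤ r)
    (hr : ∀ x ∈ s, |x| ≤ r) : (#s : ℤ) ≤ 2 * r := by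
  have hsub : insert 0 s ⊆ Icc (-r) r := by
    intro x hx
    rcases mem_insert.mp hx with rfl | hx
    · simp [hr0]
    · exact mem_Icc.mpr (abs_le.mp (hr x hx))
  have := card_le_card hsub
  rw [card_insert_of_notMem h0, Int.card_Icc] at this
  omega

theorem factorial_card_le_prod_two_mul_abs (s : Finset ℤ) (h0 : 0 ∉ s) :
    ((#s)! : ℤ) ≤ ∏ x ∈ s, 2 * |x| := by
  induction s using Finset.induction_on_max_value (fun x : ℤ => |x|) with
  | empty => simp
  | insert x s hxs hmax ih =>
    have hcard : (#s + 1 : ℤ) ≤ 2 * |x| := by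
      have := card_le_two_mul_of_abs_le h0 (abs_nonneg x) (by simpa using hmax)
      rwa [card_insert_of_notMem hxs, Nat.cast_succ] at this
    rw [card_insert_of_notMem hxs, prod_insert hxs, Nat.factorial_succ, Nat.cast_mul]
    push_cast
    gcongr
    exact ih (fun h => h0 (mem_insert_of_mem h))

end Int

theorem factorial_le_prod_two_mul_abs_sub {ι : Type*} [Fintype ι] [DecidableEq ι] {a : ι → ℤ}
    (ha : Function.Injective a) (n : ι) :
    ((Fintype.card ι - 1)! : ℤ) ≤ ∏ k ∈ univ.erase n, 2 * |a k - a n| := by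
  have hinj : Set.InjOn (fun k => a k - a n) (univ.erase n) :=
    fun x _ y _ h => ha (sub_left_injective h)
  have h0 : 0 ∉ (univ.erase n).image (fun k => a k - a n) := by
    simp only [mem_image, mem_erase, sub_eq_zero, not_exists, not_and]
    exact fun k hkn hk => hkn.1 (ha hk)
  have := Int.factorial_card_le_prod_two_mul_abs _ h0
  rwa [prod_image hinj, Finset.card_image_of_injOn hinj, card_erase_of_mem (mem_univ n),
    card_univ] at this

theorem prod_ratio_bound_general (N : ℕ) (T : ℝ)
    (a : Fin N → ℤ) (ha : Function.Injective a)
    (habs : ∀ i, (|a i| : ℝ) ≤ T / 2) (n : Fin N) :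
    (∏ k ∈ Finset.univ.erase n, (|a k| : ℝ) / |a k - a n|) ≤
      (T / 2) ^ (N - 1) * 2 ^ (N - 1) / ((N - 1).factorial : ℝ) := by
  have hcard : #(univ.erase n) = N - 1 := by simp
  have hhalf : 0 ≤ T / 2 := (abs_nonneg _).trans (habs n)
  have hnum : ∏ k ∈ univ.erase n, (|a k| : ℝ) ≤ (T / 2) ^ (N - 1) := by
    refine (prod_le_prod (fun k _ => abs_nonneg _) (fun k _ => habs k)).trans_eq ?_
    rw [prod_const, hcard]
  have hden : ((N - 1)! : ℝ) / 2 ^ (N - 1) ≤ ∏ k ∈ univ.erase n, ((|a k - a n| : ℤ) : ℝ) := by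
    have := factorial_le_prod_two_mul_abs_sub ha n
    rw [Fintype.card_fin, ← pow_card_mul_prod, hcard] at this
    rw [div_le_iff₀' (by positivity)]
    exact_mod_cast this
  calc ∏ k ∈ univ.erase n, (|a k| : ℝ) / |a k - a n|
      = (∏ k ∈ univ.erase n, (|a k| : ℝ)) / ∏ k ∈ univ.erase n, ((|a k - a n| : ℤ) : ℝ) :=
        prod_div_distrib _ _
    _ ≤ (T / 2) ^ (N - 1) / (((N - 1)! : ℝ) / 2 ^ (N - 1)) :=
        div_le_div₀ (pow_nonneg hhalf _) hnum (by positivity) hden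
    _ = (T / 2) ^ (N - 1) * 2 ^ (N - 1) / ((N - 1)! : ℝ) := by field_simp

/-- For pairwise distinct integers a_1,…,a_N with |a_i| ≤ T/2,
    ∏_{k≠n} |a_k|/|a_k − a_n| ≤ (T/2)^{N−1} 2^{N−1} / (N−1)!. -/
theorem prod_ratio_bound (N : ℕ) (hN : 2 ≤ N) (T : ℝ) (hT : 0 < T)
    (a : Fin N → ℤ) (ha : Function.Injective a)
    (habs : ∀ i, (|a i| : ℝ) ≤ T / 2) (n : Fin N) :
    (∏ k ∈ Finset.univ.erase n, (|a k| : ℝ) / |a k - a n|) ≤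
      (T / 2) ^ (N - 1) * 2 ^ (N - 1) / ((N - 1).factorial : ℝ) :=
  prod_ratio_bound_general N T a ha habs n
end

section
/- For every real r with 0 < r < 1, every λ > 0, and every constant c > 0, the expression exp((L+1)·(6·log(M+4) + 2^{−λ}·(log r)·log(L+1))) tends to 0 as L → ∞ when M+1 is chosen as an integer near (log(L+1))^{λ+1}; in particular it is at most 1/4 for all sufficiently large L. -/
open Real Filter

/-- For r ∈ (0,1), λ > 0 and any constant c > 0, if M = M(L) is chosen with M+1
    within 1 of (log(L+1))^{λ+1}, then
    exp((L+1)(6 log(M+4) + 2^{−λ}(log r) log(L+1))) → 0 as L → ∞;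
    in particular it is ≤ 1/4 for all large L. -/
theorem exp_factor_small (r lam c : ℝ) (hr0 : 0 < r) (hr1 : r < 1)
    (hlam : 0 < lam) (hc : 0 < c)
    (M : ℕ → ℕ)
    (hM : ∀ L : ℕ, |((M L : ℝ) + 1) - (Real.log ((L : ℝ) + 1)) ^ (lam + 1)| ≤ 1) :
    Filter.Tendsto
      (fun L : ℕ => Real.exp (((L : ℝ) + 1) *
        (6 * Real.log ((M L : ℝ) + 4) +
          (2 : ℝ) ^ (-lam) * Real.log r * Real.log ((L : ℝ) + 1))))
      Filter.atTop (nhds 0) ∧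
    ∃ L₀ : ℕ, ∀ L : ℕ, L₀ ≤ L →
      Real.exp (((L : ℝ) + 1) *
        (6 * Real.log ((M L : ℝ) + 4) +
          (2 : ℝ) ^ (-lam) * Real.log r * Real.log ((L : ℝ) + 1))) ≤ 1 / 4 := by
  set a : ℝ := (2 : ℝ) ^ (-lam) * Real.log r with ha_def
  have ha : a < 0 :=
    mul_neg_of_pos_of_neg (Real.rpow_pos_of_pos two_pos _) (Real.log_neg hr0 hr1)
  have hx : Tendsto (fun L : ℕ => Real.log ((L : ℝ) + 1)) atTop atTop :=
    Real.tendsto_log_atTop.comp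
      (tendsto_atTop_add_const_right _ 1 tendsto_natCast_atTop_atTop)
  have hε : 0 < (-a / 2) / (6 * (lam + 2)) := div_pos (by linarith) (by positivity)
  have hbound : ∀ᶠ x : ℝ in atTop, 6 * (lam + 2) * Real.log x ≤ (-a / 2) * x := by
    filter_upwards [Real.isLittleO_log_id_atTop.bound hε, eventually_ge_atTop (1 : ℝ)]
      with x h1 h2
    have hxpos : (0 : ℝ) < x := lt_of_lt_of_le one_pos h2
    have hlx : 0 ≤ Real.log x := Real.log_nonneg h2
    rw [Real.norm_eq_abs, Real.norm_eq_abs, id, abs_of_nonneg hlx, abs_of_pos hxpos] at h1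
    have hkey : 6 * (lam + 2) * ((-a / 2) / (6 * (lam + 2))) = -a / 2 := by
      field_simp
    nlinarith [mul_le_mul_of_nonneg_left h1 (by positivity : (0:ℝ) ≤ 6 * (lam + 2))]
  have hML : ∀ᶠ L : ℕ in atTop,
      6 * Real.log ((M L : ℝ) + 4) + a * Real.log ((L : ℝ) + 1)
        ≤ (a / 2) * Real.log ((L : ℝ) + 1) := by
    filter_upwards [hx.eventually (eventually_ge_atTop (6 : ℝ)), hx.eventually hbound]
      with L h6 hb
    set x := Real.log ((L : ℝ) + 1) with hx_def
    have hx1 : (1 : ℝ) ≤ x := by linarith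
    have hxpos : (0 : ℝ) < x := by linarith
    -- M L + 4 ≤ x^(lam+2)
    have habs := hM L
    have hMle : ((M L : ℝ) + 1) ≤ x ^ (lam + 1) + 1 := by
      have := abs_le.mp habs
      linarith [this.1, this.2]
    have hone : (1 : ℝ) ≤ x ^ (lam + 1) :=
      Real.one_le_rpow hx1 (by linarith)
    have hsplit : x ^ (lam + 2) = x ^ (lam + 1) * x := by
      rw [show lam + 2 = (lam + 1) + 1 by ring, Real.rpow_add hxpos, Real.rpow_one]
    have hMle2 : ((M L : ℝ) + 4) ≤ x ^ (lam + 2) := by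
      rw [hsplit]
      nlinarith
    have hlogM : Real.log ((M L : ℝ) + 4) ≤ (lam + 2) * x := by
      calc Real.log ((M L : ℝ) + 4) ≤ Real.log (x ^ (lam + 2)) :=
            Real.log_le_log (by positivity) hMle2
        _ = (lam + 2) * Real.log x := Real.log_rpow hxpos _
        _ ≤ (lam + 2) * x := by
            have := Real.log_le_sub_one_of_pos hxpos
            nlinarith
    have h6M : 6 * Real.log ((M L : ℝ) + 4) ≤ (-a / 2) * x := by
      calc 6 * Real.log ((M L : ℝ) + 4)
          ≤ 6 * Real.log (x ^ (lam + 2)) := by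
            have := Real.log_le_log (by positivity : (0:ℝ) < (M L : ℝ) + 4) hMle2
            linarith
        _ = 6 * ((lam + 2) * Real.log x) := by rw [Real.log_rpow hxpos]
        _ = 6 * (lam + 2) * Real.log x := by ring
        _ ≤ (-a / 2) * x := hb
    linarith
  have hneg : Tendsto
      (fun L : ℕ => ((L : ℝ) + 1) *
        (6 * Real.log ((M L : ℝ) + 4) + a * Real.log ((L : ℝ) + 1)))
      atTop atBot := by
    have hhalf : Tendsto (fun L : ℕ => (a / 2) * Real.log ((L : ℝ) + 1)) atTop atBot :=
      hx.const_mul_atTop_of_neg (by linarith)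
    apply tendsto_atBot_mono' atTop _ hhalf
    filter_upwards [hML, hx.eventually (eventually_ge_atTop (0 : ℝ))] with L hf hx0
    have hL1 : (1 : ℝ) ≤ (L : ℝ) + 1 := by have := Nat.cast_nonneg (α := ℝ) L; linarith
    have hf0 : 6 * Real.log ((M L : ℝ) + 4) + a * Real.log ((L : ℝ) + 1) ≤ 0 := by
      nlinarith
    nlinarith
  have hmain : Tendsto
      (fun L : ℕ => Real.exp (((L : ℝ) + 1) *
        (6 * Real.log ((M L : ℝ) + 4) + a * Real.log ((L : ℝ) + 1))))
      atTop (nhds 0) := Real.tendsto_exp_atBot.comp hneg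
  refine ⟨hmain, ?_⟩
  have hev : ∀ᶠ L : ℕ in atTop,
      Real.exp (((L : ℝ) + 1) *
        (6 * Real.log ((M L : ℝ) + 4) + a * Real.log ((L : ℝ) + 1))) ≤ 1 / 4 := by
    have := hmain.eventually_lt_const (show (0:ℝ) < 1/4 by norm_num)
    filter_upwards [this] with L h using le_of_lt h
  obtain ⟨L₀, hL₀⟩ := eventually_atTop.mp hev
  exact ⟨L₀, hL₀⟩
end

section
/- Suppose f : [0,∞) → ℝ is analytic and definable in an o-minimal structure, and P(X,Y) is a nonzero real polynomial such that P(n, f(n)) = 0 for infinitely many positive integers n. Then P(x, f(x)) = 0 for all x ≥ 0; in particular f is an algebraic function. -/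
/-!
The function `g x = P(x, f x)` is analytic on `[0, ∞)`. Its zero set is a finite union of
order-connected sets and contains infinitely many integers, so by pigeonhole one of these sets
contains two distinct integers and hence the interval between them. An analytic function vanishing
on an interval vanishes on the connected set `(0, ∞)` by the identity theorem, and at `0` by
continuity.
-/

open Set

section AnalyticMvPolynomial

variable {𝕜 E A B σ : Type*} [NontriviallyNormedField 𝕜] [NormedAddCommGroup E]
  [NormedSpace 𝕜 E] [CommSemiring A] [NormedCommRing B] [NormedAlgebra 𝕜 B] [Algebra A B]
  {f : E → σ → B} {s : Set E} {z : E}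

theorem AnalyticWithinAt.aeval_mvPolynomial (hf : ∀ i, AnalyticWithinAt 𝕜 (f · i) s z)
    (p : MvPolynomial σ A) : AnalyticWithinAt 𝕜 (fun x ↦ MvPolynomial.aeval (f x) p) s z := by
  apply p.induction_on (fun k ↦ ?_) (fun p q hp hq ↦ ?_) fun p i hp ↦ ?_
  · simp_rw [MvPolynomial.aeval_C]; exact analyticWithinAt_const
  · simp_rw [map_add]; exact hp.add hq
  · simp_rw [map_mul, MvPolynomial.aeval_X]; exact hp.mul (hf i)

theorem AnalyticOn.aeval_mvPolynomial (hf : ∀ i, AnalyticOn 𝕜 (f · i) s)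
    (p : MvPolynomial σ A) : AnalyticOn 𝕜 (fun x ↦ MvPolynomial.aeval (f x) p) s :=
  fun x hx ↦ .aeval_mvPolynomial (hf · x hx) p

end AnalyticMvPolynomial

theorem AnalyticOn.eqOn_zero_Ici_of_eqOn_zero_Ioo {E : Type*} [NormedAddCommGroup E]
    [NormedSpace ℝ E] {g : ℝ → E} {a b c : ℝ} (hg : AnalyticOn ℝ g (Ici c))
    (hca : c ≤ a) (hab : a < b) (hzero : EqOn g 0 (Ioo a b)) : EqOn g 0 (Ici c) := by
  have hmid : (a + b) / 2 ∈ Ioo a b := ⟨by linarith, by linarith⟩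
  have hg' : AnalyticOnNhd ℝ g (Ioi c) :=
    isOpen_Ioi.analyticOn_iff_analyticOnNhd.1 (hg.mono Ioi_subset_Ici_self)
  have hIoi : EqOn g 0 (Ioi c) :=
    hg'.eqOn_zero_of_preconnected_of_eventuallyEq_zero isPreconnected_Ioi (hca.trans_lt hmid.1)
      (Filter.eventually_of_mem (Ioo_mem_nhds hmid.1 hmid.2) hzero)
  exact hIoi.of_subset_closure hg.continuousOn continuousOn_const Ioi_subset_Ici_self
    (closure_Ioi c).symm.subset

theorem exists_Icc_subset_iUnion_of_infinite {α ι : Type*} [LinearOrder α] [Finite ι]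
    {I : ι → Set α} (hI : ∀ k, (I k).OrdConnected) {S : Set α} (hS : S.Infinite)
    (hSI : S ⊆ ⋃ k, I k) : ∃ a b, a < b ∧ Icc a b ⊆ ⋃ k, I k := by
  obtain ⟨k, hk⟩ : ∃ k, (S ∩ I k).Infinite := by
    by_contra! hfin
    rw [← inter_eq_left.2 hSI, inter_iUnion] at hS
    exact hS (finite_iUnion hfin)
  obtain ⟨x, hx, y, hy, hxy⟩ := hk.nontrivial.exists_lt
  exact ⟨x, y, hxy, ((hI k).out hx.2 hy.2).trans (subset_iUnion I k)⟩

theorem definable_analytic_algebraic_general (f : ℝ → ℝ)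
    (hf : AnalyticOn ℝ f (Set.Ici 0))
    (P : MvPolynomial (Fin 2) ℝ)
    -- o-minimality: the zero set of the definable function x ↦ P(x, f(x)) on
    -- [0,∞) is a finite union of order-connected sets (points and intervals)
    (hominimal : ∃ (n : ℕ) (I : Fin n → Set ℝ), (∀ k, (I k).OrdConnected) ∧
      {x : ℝ | 0 ≤ x ∧
        MvPolynomial.eval (fun i : Fin 2 => if i = 0 then x else f x) P = 0} =
        ⋃ k, I k)
    (hzeros : {n : ℕ | 0 < n ∧
      MvPolynomial.eval (fun i : Fin 2 => if i = 0 then (n : ℝ) else f n) P = 0}.Infinite) :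
    ∀ x : ℝ, 0 ≤ x →
      MvPolynomial.eval (fun i : Fin 2 => if i = 0 then x else f x) P = 0 := by
  obtain ⟨m, I, hI, hZ⟩ := hominimal
  have hg : AnalyticOn ℝ
      (fun x ↦ MvPolynomial.eval (fun i : Fin 2 => if i = 0 then x else f x) P) (Ici 0) := by
    refine AnalyticOn.aeval_mvPolynomial (fun i ↦ ?_) P
    split_ifs
    exacts [analyticOn_id, hf]
  have hS := hzeros.image Nat.cast_injective.injOn (f := ((↑) : ℕ → ℝ))
  obtain ⟨a, b, hab, habZ⟩ := exists_Icc_subset_iUnion_of_infinite hI hS <| by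
    rintro _ ⟨n, ⟨-, hn⟩, rfl⟩
    exact hZ ▸ ⟨n.cast_nonneg, hn⟩
  rw [← hZ] at habZ
  exact fun x hx ↦ hg.eqOn_zero_Ici_of_eqOn_zero_Ioo (habZ (left_mem_Icc.2 hab.le)).1 hab
    (fun y hy ↦ (habZ (Ioo_subset_Icc_self hy)).2) hx

/-- If f is analytic on [0,∞) and definable in an o-minimal structure (so that
    the zero set of the definable function x ↦ P(x, f(x)) on [0,∞) is a finite
    union of points and intervals, i.e. a finite union of order-connected sets),
    and P is a nonzero real polynomial with P(n, f(n)) = 0 for infinitely many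
    positive integers n, then P(x, f(x)) = 0 for all x ≥ 0. -/
theorem definable_analytic_algebraic (f : ℝ → ℝ)
    (hf : AnalyticOn ℝ f (Set.Ici 0))
    (P : MvPolynomial (Fin 2) ℝ) (hP : P ≠ 0)
    -- o-minimality: the zero set of the definable function x ↦ P(x, f(x)) on
    -- [0,∞) is a finite union of order-connected sets (points and intervals)
    (hominimal : ∃ (n : ℕ) (I : Fin n → Set ℝ), (∀ k, (I k).OrdConnected) ∧
      {x : ℝ | 0 ≤ x ∧
        MvPolynomial.eval (fun i : Fin 2 => if i = 0 then x else f x) P = 0} =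
        ⋃ k, I k)
    (hzeros : {n : ℕ | 0 < n ∧
      MvPolynomial.eval (fun i : Fin 2 => if i = 0 then (n : ℝ) else f n) P = 0}.Infinite) :
    ∀ x : ℝ, 0 ≤ x →
      MvPolynomial.eval (fun i : Fin 2 => if i = 0 then x else f x) P = 0 :=
  definable_analytic_algebraic_general f hf P hominimal hzeros
end
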